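/- For every n ≥ 1, the n-th symmetric product SP^n(S¹) of the circle S¹ (the unit circle Circle = { z ∈ ℂ | |z| = 1 }) is homotopy equivalent to S¹: there exists a continuous homotopy equivalence (ContinuousMap.HomotopyEquiv) between SP^n(Circle) and Circle. -/

import Mathlib

/-- The setoid on `Fin n → X` whose classes are orbits of the permutation action
of `Equiv.Perm (Fin n)`. -/
def SPSetoid (n : ℕ) (X : Type*) : Setoid (Fin n → X) where
  r f g := ∃ σ : Equiv.Perm (Fin n), f ∘ σ = g
  iseqv := by
    constructor
    · exact fun f => ⟨Equiv.refl _, rfl⟩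
    · rintro f g ⟨σ, rfl⟩
      exact ⟨σ.symm, by funext i; simp⟩
    · rintro f g h ⟨σ, rfl⟩ ⟨τ, rfl⟩
      exact ⟨τ.trans σ, by funext i; simp⟩

/-- The `n`-th symmetric product `SP^n(X) = X^n / S_n`, with the quotient topology. -/
def SP (n : ℕ) (X : Type*) [TopologicalSpace X] : Type _ :=
  Quotient (SPSetoid n X)

instance (n : ℕ) (X : Type*) [TopologicalSpace X] : TopologicalSpace (SP n X) :=
  inferInstanceAs (TopologicalSpace (Quotient (SPSetoid n X)))

/-!
The Vieta map, sending `z : Fin n → ℂ` to the lower coefficients of `∏ i, (X - z i)`, is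
invariant under permutations, injective on orbits (a monic polynomial determines its roots up
to order) and surjective (ℂ is algebraically closed). It is proper because the roots of a monic
polynomial are bounded in terms of its coefficients (Mahler measure), so it descends to a
homeomorphism. On `SP^(m+1)(ℂ*)` its image is the set of coefficient vectors with nonzero
constant term, which is `ℂ* × ℂ^m ≃ ℂ*`. Since `SP^n` preserves homotopy equivalences and
`ℂ* ≃ S¹` radially, `SP^n(S¹) ≃ SP^n(ℂ*) ≃ ℂ* ≃ S¹`.
-/

open Polynomial Topology
open scoped ContinuousMap

namespace SP

variable {n : ℕ} {X Y Z : Type*} [TopologicalSpace X] [TopologicalSpace Y] [TopologicalSpace Z]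

def mk (z : Fin n → X) : SP n X := Quotient.mk (SPSetoid n X) z

theorem continuous_mk : Continuous (mk : (Fin n → X) → SP n X) :=
  continuous_quot_mk

theorem mk_eq_mk_iff {z w : Fin n → X} : mk z = mk w ↔ ∃ σ : Equiv.Perm (Fin n), z ∘ σ = w :=
  Quotient.eq

def map (f : C(X, Y)) : C(SP n X, SP n Y) where
  toFun := Quotient.map' (f ∘ ·) fun _ _ ⟨σ, hσ⟩ => ⟨σ, by rw [← hσ]; rfl⟩
  continuous_toFun := (continuous_mk.comp (by fun_prop)).quotient_lift _

@[simp]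
theorem map_id : map (n := n) (ContinuousMap.id X) = ContinuousMap.id (SP n X) := by
  ext x
  induction x using Quotient.inductionOn
  rfl

theorem map_comp (g : C(Y, Z)) (f : C(X, Y)) :
    map (n := n) (g.comp f) = (map g).comp (map f) := by
  ext x
  induction x using Quotient.inductionOn
  rfl

end SP

namespace ContinuousMap

variable {n : ℕ} {X Y : Type*} [TopologicalSpace X] [TopologicalSpace Y] {f g : C(X, Y)}

def Homotopy.spMap (H : f.Homotopy g) : (SP.map (n := n) f).Homotopy (SP.map g) where
  toFun p := SP.map (H.curry p.1) p.2
  continuous_toFun := isQuotientMap_quot_mk.continuous_lift_prod_right <|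
    SP.continuous_mk.comp (continuous_pi fun i => H.continuous.comp (by fun_prop))
  map_zero_left x := by simp
  map_one_left x := by simp

theorem Homotopic.spMap (h : f.Homotopic g) : (SP.map (n := n) f).Homotopic (SP.map g) :=
  h.map Homotopy.spMap

def HomotopyEquiv.spCongr (e : X ≃ₕ Y) : SP n X ≃ₕ SP n Y where
  toFun := SP.map e.toFun
  invFun := SP.map e.invFun
  left_inv := by
    rw [← SP.map_comp, ← SP.map_id]
    exact e.left_inv.spMap
  right_inv := by
    rw [← SP.map_comp, ← SP.map_id]
    exact e.right_inv.spMap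

end ContinuousMap

theorem Multiset.exists_fin_univ_map_eq {α : Type*} {n : ℕ} (s : Multiset α)
    (hs : Multiset.card s = n) : ∃ z : Fin n → α, Finset.univ.val.map z = s := by
  have hlen : s.toList.length = n := by simpa using hs
  refine ⟨fun i => s.toList.get (i.cast hlen.symm), ?_⟩
  rw [Fin.univ_val_map, ← List.ofFn_congr hlen s.toList.get, List.ofFn_get,
    Multiset.coe_toList]

theorem Fintype.exists_perm_comp_eq_of_univ_map_eq {α β : Type*} [Fintype α] {z w : α → β}
    (h : Finset.univ.val.map z = Finset.univ.val.map w) :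
    ∃ σ : Equiv.Perm α, z ∘ σ = w := by
  classical
  have hfiber (b : β) : Nonempty ({a // w a = b} ≃ {a // z a = b}) := by
    refine Fintype.card_eq.mp ?_
    simpa [Fintype.card_subtype, Finset.card, Multiset.count_map, eq_comm] using
      congrArg (Multiset.count b) h.symm
  exact ⟨Equiv.ofFiberEquiv fun b => (hfiber b).some, funext (Equiv.ofFiberEquiv_map _)⟩

namespace Polynomial

variable {R : Type*} [CommRing R] {n : ℕ}

noncomputable def ofRoots (z : Fin n → R) : R[X] := ∏ i, (X - C (z i))

theorem ofRoots_eq_multiset_prod (z : Fin n → R) :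
    ofRoots z = ((Finset.univ.val.map z).map fun a => X - C a).prod := by
  rw [ofRoots, Finset.prod_eq_multiset_prod, Multiset.map_map]
  rfl

theorem ofRoots_comp_perm (z : Fin n → R) (σ : Equiv.Perm (Fin n)) :
    ofRoots (z ∘ σ) = ofRoots z :=
  Equiv.prod_comp σ fun i => X - C (z i)

theorem monic_ofRoots (z : Fin n → R) : (ofRoots z).Monic :=
  monic_prod_of_monic _ _ fun i _ => monic_X_sub_C (z i)

theorem natDegree_ofRoots [Nontrivial R] (z : Fin n → R) : (ofRoots z).natDegree = n := by
  simp [ofRoots, natDegree_prod_of_monic _ _ fun i _ => monic_X_sub_C (z i)]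

theorem roots_ofRoots [IsDomain R] (z : Fin n → R) :
    (ofRoots z).roots = Finset.univ.val.map z := by
  rw [ofRoots_eq_multiset_prod, roots_multiset_prod_X_sub_C]

theorem coeff_zero_ofRoots (z : Fin n → R) : (ofRoots z).coeff 0 = (-1) ^ n * ∏ i, z i := by
  simp [ofRoots, coeff_zero_eq_eval_zero, eval_prod, Finset.prod_neg]

noncomputable def vieta (z : Fin n → R) : Fin n → R := toFn n (ofRoots z)

theorem vieta_apply (z : Fin n → R) (k : Fin n) : vieta z k = (ofRoots z).coeff k := rfl

theorem vieta_comp_perm (z : Fin n → R) (σ : Equiv.Perm (Fin n)) : vieta (z ∘ σ) = vieta z := by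
  rw [vieta, ofRoots_comp_perm, vieta]

theorem ofRoots_eq_map_eval (z : Fin n → R) :
    ofRoots z = (ofRoots (MvPolynomial.X : Fin n → MvPolynomial (Fin n) R)).map
      (MvPolynomial.eval z) := by
  simp [ofRoots, Polynomial.map_prod]

theorem continuous_vieta [TopologicalSpace R] [IsTopologicalRing R] :
    Continuous (vieta : (Fin n → R) → Fin n → R) := by
  refine continuous_pi fun k => ?_
  have hk : (fun z : Fin n → R => vieta z k) = fun z =>
      MvPolynomial.eval z ((ofRoots (MvPolynomial.X (R := R))).coeff k) :=
    _root_.funext fun z => by rw [vieta_apply, ofRoots_eq_map_eval, coeff_map]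
  exact hk ▸ MvPolynomial.continuous_eval _

theorem Monic.eq_of_toFn_eq {p q : R[X]} (hp : p.Monic) (hq : q.Monic) (hpn : p.natDegree = n)
    (hqn : q.natDegree = n) (h : toFn n p = toFn n q) : p = q := by
  ext k
  rcases lt_trichotomy k n with hk | hk | hk
  · exact congrFun h ⟨k, hk⟩
  · rw [hk, ← hpn, hp.coeff_natDegree, hpn, ← hqn, hq.coeff_natDegree]
  · rw [coeff_eq_zero_of_natDegree_lt (hpn ▸ hk), coeff_eq_zero_of_natDegree_lt (hqn ▸ hk)]

theorem exists_perm_comp_eq_of_vieta_eq [IsDomain R] {z w : Fin n → R} (h : vieta z = vieta w) :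
    ∃ σ : Equiv.Perm (Fin n), z ∘ σ = w := by
  have hpoly : ofRoots z = ofRoots w :=
    (monic_ofRoots z).eq_of_toFn_eq (monic_ofRoots w) (natDegree_ofRoots z)
      (natDegree_ofRoots w) h
  refine Fintype.exists_perm_comp_eq_of_univ_map_eq ?_
  rw [← roots_ofRoots, ← roots_ofRoots, hpoly]

theorem vieta_zero_ne_zero_iff [IsDomain R] {m : ℕ}
    (z : Fin (m + 1) → R) : vieta z 0 ≠ 0 ↔ ∀ i, z i ≠ 0 := by
  simp [vieta_apply, coeff_zero_ofRoots, Finset.prod_ne_zero_iff]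

theorem vieta_surjective {K : Type*} [Field K] [IsAlgClosed K] :
    Function.Surjective (vieta : (Fin n → K) → Fin n → K) := by
  classical
  intro a
  set p : K[X] := X ^ n + ofFn n a
  have hp : p.Monic := monic_X_pow_add (ofFn_degree_lt a)
  have hpn : p.natDegree = n :=
    (natDegree_add_eq_left_of_degree_lt (by rw [degree_X_pow]; exact ofFn_degree_lt a)).trans
      (natDegree_X_pow n)
  obtain ⟨z, hz⟩ := p.roots.exists_fin_univ_map_eq (IsAlgClosed.card_roots_eq_natDegree.trans hpn)
  have hzp : ofRoots z = p := by
    rw [ofRoots_eq_multiset_prod, hz]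
    exact prod_multiset_X_sub_C_of_monic_of_roots_card_eq hp
      IsAlgClosed.card_roots_eq_natDegree
  refine ⟨z, ?_⟩
  have hXn : toFn n (X ^ n : K[X]) = 0 := by
    ext k
    simp [toFn, coeff_X_pow, k.is_lt.ne]
  rw [vieta, hzp, map_add, toFn_comp_ofFn_eq_id, hXn, zero_add]

theorem Monic.norm_le_sum_norm_coeff_of_mem_roots {p : ℂ[X]} (hp : p.Monic) {r : ℂ}
    (hr : r ∈ p.roots) : ‖r‖ ≤ p.sum fun _ a => ‖a‖ :=
  calc ‖r‖ ≤ max 1 ‖r‖ := le_max_right _ _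
    _ ≤ (p.roots.map fun a => max 1 ‖a‖).prod :=
      Multiset.mem_le_prod_of_one_le (fun _ => le_max_left _ _) hr
    _ ≤ p.mahlerMeasure :=
      prod_max_one_norm_roots_le_mahlerMeasure_of_one_le_leadingCoeff (by simp [hp.leadingCoeff])
    _ ≤ p.sum fun _ a => ‖a‖ := mahlerMeasure_le_sum_norm_coeff p

theorem norm_le_one_add_sum_norm_vieta (z : Fin n → ℂ) (i : Fin n) :
    ‖z i‖ ≤ 1 + ∑ k, ‖vieta z k‖ := by
  have hroot : z i ∈ (ofRoots z).roots := by
    rw [roots_ofRoots]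
    exact Multiset.mem_map_of_mem _ (Finset.mem_univ i)
  have hlead : (ofRoots z).coeff n = 1 := by
    rw [← (monic_ofRoots z).coeff_natDegree, natDegree_ofRoots]
  refine ((monic_ofRoots z).norm_le_sum_norm_coeff_of_mem_roots hroot).trans_eq ?_
  rw [sum_over_range _ fun _ => norm_zero, natDegree_ofRoots, Finset.sum_range_succ, hlead,
    norm_one, add_comm, ← Fin.sum_univ_eq_sum_range (fun k => ‖(ofRoots z).coeff k‖)]
  rfl

theorem isProperMap_vieta : IsProperMap (vieta : (Fin n → ℂ) → Fin n → ℂ) := by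
  refine isProperMap_iff_isCompact_preimage.mpr ⟨continuous_vieta, fun K hK => ?_⟩
  obtain ⟨C, hC⟩ := hK.exists_bound_of_continuousOn (f := fun a => 1 + ∑ k, ‖a k‖)
    (by fun_prop)
  refine (isCompact_univ_pi fun _ => isCompact_closedBall (0 : ℂ) C).of_isClosed_subset
    (hK.isClosed.preimage continuous_vieta) fun z hz i _ => ?_
  rw [mem_closedBall_zero_iff]
  exact (norm_le_one_add_sum_norm_vieta z i).trans ((Real.le_norm_self _).trans (hC _ hz))

end Polynomial

namespace ContinuousMap.HomotopyEquiv

noncomputable def prodContractible (X Y : Type*) [TopologicalSpace X] [TopologicalSpace Y]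
    [ContractibleSpace Y] : X × Y ≃ₕ X :=
  ((refl X).prodCongr (ContractibleSpace.hequiv_unit Y).some).trans
    (Homeomorph.prodPUnit X).toHomotopyEquiv

end ContinuousMap.HomotopyEquiv

noncomputable def puncturedPlaneHomotopyEquivCircle : ({0}ᶜ : Set ℂ) ≃ₕ Circle :=
  haveI : ContractibleSpace (Set.Ioi (0 : ℝ)) :=
    (convex_Ioi 0).contractibleSpace ⟨1, Set.mem_Ioi.mpr one_pos⟩
  (homeomorphUnitSphereProd ℂ).toHomotopyEquiv.trans
    (ContinuousMap.HomotopyEquiv.prodContractible _ _)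

/-- Coefficient vectors of monic polynomials of degree `m + 1` with nonzero constant term. -/
abbrev NonzeroConstCoeff (m : ℕ) : Type := {a : Fin (m + 1) → ℂ // a 0 ≠ 0}

def NonzeroConstCoeff.homeomorphProd (m : ℕ) :
    NonzeroConstCoeff m ≃ₜ ({0}ᶜ : Set ℂ) × (Fin m → ℂ) where
  toFun a := (⟨a.1 0, a.2⟩, Fin.tail a.1)
  invFun p := ⟨Fin.cons p.1.1 p.2, p.1.2⟩
  left_inv a := by simp
  right_inv p := by simp
  continuous_toFun :=
    (((continuous_apply 0).comp continuous_subtype_val).subtype_mk _).prodMk (by fun_prop)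
  continuous_invFun := by fun_prop

noncomputable def NonzeroConstCoeff.homotopyEquivPuncturedPlane (m : ℕ) :
    NonzeroConstCoeff m ≃ₕ ({0}ᶜ : Set ℂ) :=
  (homeomorphProd m).toHomotopyEquiv.trans (.prodContractible _ _)

namespace SP

variable (m : ℕ)

noncomputable def puncturedVieta : SP (m + 1) ({0}ᶜ : Set ℂ) → NonzeroConstCoeff m :=
  Quotient.lift
    (fun z => ⟨vieta (Subtype.val ∘ z), (vieta_zero_ne_zero_iff _).mpr fun i => (z i).2⟩)
    fun z _ ⟨σ, hσ⟩ => Subtype.ext <| hσ ▸ (vieta_comp_perm (Subtype.val ∘ z) σ).symm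

theorem continuous_puncturedVieta : Continuous (puncturedVieta m) :=
  ((continuous_vieta.comp (by fun_prop)).subtype_mk _).quotient_lift _

theorem puncturedVieta_injective : Function.Injective (puncturedVieta m) := by
  rintro ⟨z⟩ ⟨w⟩ h
  obtain ⟨σ, hσ⟩ := exists_perm_comp_eq_of_vieta_eq (congrArg Subtype.val h)
  exact mk_eq_mk_iff.mpr ⟨σ, funext fun i => Subtype.ext (congrFun hσ i)⟩

theorem puncturedVieta_surjective : Function.Surjective (puncturedVieta m) := by
  rintro ⟨a, ha⟩
  obtain ⟨z, rfl⟩ := vieta_surjective a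
  exact ⟨mk fun i => ⟨z i, (vieta_zero_ne_zero_iff z).mp ha i⟩, rfl⟩

theorem isProperMap_puncturedVieta : IsProperMap (puncturedVieta m) := by
  refine isProperMap_iff_isCompact_preimage.mpr ⟨continuous_puncturedVieta m, fun K hK => ?_⟩
  let ι : (Fin (m + 1) → ({0}ᶜ : Set ℂ)) → Fin (m + 1) → ℂ := (Subtype.val ∘ ·)
  have hι : IsInducing ι :=
    (IsEmbedding.piMap fun _ => IsEmbedding.subtypeVal).isInducing
  have hL : IsCompact (vieta ⁻¹' (Subtype.val '' K)) :=
    isProperMap_vieta.isCompact_preimage (hK.image continuous_subtype_val)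
  have hLι : vieta ⁻¹' (Subtype.val '' K) ⊆ Set.range ι := by
    rintro z ⟨a, haK, ha⟩
    have hz : ∀ i, z i ≠ 0 := (vieta_zero_ne_zero_iff z).mp (ha ▸ a.2)
    exact ⟨fun i => ⟨z i, hz i⟩, rfl⟩
  refine ((hι.isCompact_preimage' hL hLι).image continuous_mk).of_isClosed_subset
    (hK.isClosed.preimage (continuous_puncturedVieta m)) ?_
  rintro ⟨z⟩ hz
  exact ⟨z, ⟨_, hz, rfl⟩, rfl⟩

noncomputable def puncturedVietaHomeomorph : SP (m + 1) ({0}ᶜ : Set ℂ) ≃ₜ NonzeroConstCoeff m :=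
  (Equiv.ofBijective _ ⟨puncturedVieta_injective m, puncturedVieta_surjective m⟩)
    |>.toHomeomorphOfContinuousClosed (continuous_puncturedVieta m)
      (isProperMap_puncturedVieta m).isClosedMap

end SP

/-- For every `n ≥ 1`, the symmetric product `SP^n(S¹)` of the unit circle is
homotopy equivalent to the circle. -/
theorem SP_circle_homotopyEquiv_circle (n : ℕ) (hn : 1 ≤ n) :
    Nonempty (ContinuousMap.HomotopyEquiv (SP n Circle) Circle) := by
  obtain ⟨m, rfl⟩ := Nat.exists_eq_add_of_le' hn
  exact ⟨puncturedPlaneHomotopyEquivCircle.symm.spCongr.trans <|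
    (SP.puncturedVietaHomeomorph m).toHomotopyEquiv.trans <|
      (NonzeroConstCoeff.homotopyEquivPuncturedPlane m).trans puncturedPlaneHomotopyEquivCircle⟩
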